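/- arXiv:2408.09398 — 3 statements merged into one kernel-verified Lean document; each statement's English description precedes it below -/
import Mathlib

section
/- There exists a constant λ₁ ∈ (0,1) such that for every m ∈ ℕ⁺ and every x ∈ (0,1), the m-th derivative of the weighting function satisfies |w^{(m)}(x)| ≤ (m!/λ₁^m) · max{ x^{−m} exp(−1/(2x)), (1−x)^{−m} exp(−1/(2(1−x))) }. -/
open Finset

/-- Laskar's exponential weighting function. -/
noncomputable def w (x : ℝ) : ℝ :=
  if 0 < x ∧ x < 1 then
    (∫ s in (0:ℝ)..1, Real.exp (-(s * (1 - s))⁻¹))⁻¹ * Real.exp (-(x * (1 - x))⁻¹)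
  else 0

/-!
On `(0,1)`, `w` is the real part of `F z = c⁻¹ exp (-1 / (z (1 - z)))`, holomorphic off `{0, 1}`.
Inversion maps the disc `‖u - r‖ ≤ r` into the half-plane `Re u⁻¹ ≥ 1 / (2r)`; since
`1 / (z (1 - z)) = 1 / z + 1 / (1 - z)`, this gives `‖F z‖ ≤ c⁻¹ exp (-1 / (2t))` on the circle of
radius `t / 2` around `x`, where `t = min x (1 - x)`. Cauchy's estimate on that circle, together
with `c ≤ 1`, yields the bound with `λ₁ = c / 2`.
-/

open Complex Metric Set

noncomputable def wConst : ℝ := ∫ s in (0:ℝ)..1, Real.exp (-(s * (1 - s))⁻¹)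

lemma exp_neg_inv_mul_one_sub_le_one {s : ℝ} (hs : s ∈ Icc (0:ℝ) 1) :
    Real.exp (-(s * (1 - s))⁻¹) ≤ 1 := by
  have : 0 ≤ s * (1 - s) := mul_nonneg hs.1 (by linarith [hs.2])
  rw [Real.exp_le_one_iff, neg_nonpos]
  positivity

lemma intervalIntegrable_exp_neg_inv_mul_one_sub :
    IntervalIntegrable (fun s : ℝ => Real.exp (-(s * (1 - s))⁻¹)) MeasureTheory.volume 0 1 := by
  refine (intervalIntegrable_const (c := (1:ℝ))).mono_fun' (by fun_prop) ?_
  rw [uIoc_of_le zero_le_one]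
  filter_upwards [MeasureTheory.ae_restrict_mem measurableSet_Ioc] with s hs
  rw [Real.norm_of_nonneg (Real.exp_pos _).le]
  exact exp_neg_inv_mul_one_sub_le_one (Ioc_subset_Icc_self hs)

lemma wConst_pos : 0 < wConst :=
  intervalIntegral.intervalIntegral_pos_of_pos_on intervalIntegrable_exp_neg_inv_mul_one_sub
    (fun _ _ => Real.exp_pos _) one_pos

lemma wConst_le_one : wConst ≤ 1 := by
  refine (intervalIntegral.integral_mono_on zero_le_one intervalIntegrable_exp_neg_inv_mul_one_sub
    intervalIntegrable_const fun s hs => exp_neg_inv_mul_one_sub_le_one hs).trans_eq ?_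
  simp

noncomputable def wComplex (z : ℂ) : ℂ := (wConst : ℂ)⁻¹ * cexp (-(z * (1 - z))⁻¹)

lemma differentiableOn_wComplex : DifferentiableOn ℂ wComplex {0, 1}ᶜ := by
  intro z hz
  simp only [mem_compl_iff, mem_insert_iff, mem_singleton_iff, not_or] at hz
  have : z * (1 - z) ≠ 0 := mul_ne_zero hz.1 (sub_ne_zero.mpr (Ne.symm hz.2))
  unfold wComplex
  fun_prop (disch := exact this)

lemma w_eq_re_wComplex {x : ℝ} (hx : x ∈ Ioo (0:ℝ) 1) : w x = (wComplex x).re := by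
  rw [w, if_pos (show 0 < x ∧ x < 1 from hx), wComplex, ← wConst]
  norm_cast

theorem iteratedDeriv_eq_re_of_differentiableOn {f : ℝ → ℝ} {F : ℂ → ℂ} {U : Set ℂ} {V : Set ℝ}
    (hU : IsOpen U) (hV : IsOpen V) (hVU : ∀ x ∈ V, (x : ℂ) ∈ U) (hF : DifferentiableOn ℂ F U)
    (hfF : ∀ x ∈ V, f x = (F x).re) (m : ℕ) :
    ∀ x ∈ V, iteratedDeriv m f x = (iteratedDeriv m F x).re := by
  induction m with
  | zero => simpa using hfF
  | succ m ih =>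
    intro x hx
    have hFm : DifferentiableOn ℂ (iteratedDeriv m F) U := by
      rw [iteratedDeriv_eq_iterate]
      exact ((hF.analyticOnNhd hU).iterated_deriv m).differentiableOn
    have hd := ((hFm x (hVU x hx)).differentiableAt (hU.mem_nhds (hVU x hx))).hasDerivAt
    rw [iteratedDeriv_succ, (Filter.eventuallyEq_of_mem (hV.mem_nhds hx) ih).deriv_eq,
      hd.real_of_complex.deriv, ← iteratedDeriv_succ]

lemma min_one_sub_pos {x : ℝ} (hx : x ∈ Ioo (0:ℝ) 1) : 0 < min x (1 - x) :=
  lt_min hx.1 (sub_pos.mpr hx.2)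

lemma le_re_inv_of_norm_sub_le {r : ℝ} (hr : 0 < r) {u : ℂ} (hu0 : u ≠ 0) (hu : ‖u - r‖ ≤ r) :
    (2 * r)⁻¹ ≤ (u⁻¹).re := by
  have hsq : normSq (u - r) ≤ r ^ 2 := by
    rw [← Complex.sq_norm]; exact pow_le_pow_left₀ (norm_nonneg _) hu 2
  have hpos : 0 < normSq u := normSq_pos.mpr hu0
  simp only [normSq_apply, sub_re, sub_im, ofReal_re, ofReal_im, sub_zero] at hsq hpos
  rw [inv_re, normSq_apply, inv_eq_one_div, div_le_div_iff₀ (by positivity) hpos]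
  nlinarith

lemma closedBall_subset_compl_zero_one {x ρ : ℝ} (hρ : ρ < min x (1 - x)) :
    closedBall (x : ℂ) ρ ⊆ {0, 1}ᶜ := by
  intro z hz
  rw [mem_closedBall, dist_eq] at hz
  simp only [mem_compl_iff, mem_insert_iff, mem_singleton_iff, not_or]
  constructor <;> rintro rfl
  · simp only [zero_sub, norm_neg, norm_real, Real.norm_eq_abs] at hz
    linarith [le_abs_self x, min_le_left x (1 - x)]
  · rw [← ofReal_one, ← ofReal_sub, norm_real, Real.norm_eq_abs] at hz
    linarith [le_abs_self (1 - x), min_le_right x (1 - x)]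

lemma norm_wComplex_le {x : ℝ} (hx : x ∈ Ioo (0:ℝ) 1) {z : ℂ} (hz : ‖z - x‖ < min x (1 - x)) :
    ‖wComplex z‖ ≤ wConst⁻¹ * Real.exp (-(2 * min x (1 - x))⁻¹) := by
  have hz01 := closedBall_subset_compl_zero_one hz (mem_closedBall.mpr (by rw [dist_eq]))
  simp only [mem_compl_iff, mem_insert_iff, mem_singleton_iff, not_or] at hz01
  obtain ⟨hz0, hz1⟩ := hz01
  have hx0 : 0 < 1 - x := sub_pos.mpr hx.2
  have h0 : (2 * x)⁻¹ ≤ (z⁻¹).re :=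
    le_re_inv_of_norm_sub_le hx.1 hz0 (hz.le.trans (min_le_left _ _))
  have h1 : (2 * (1 - x))⁻¹ ≤ ((1 - z)⁻¹).re := by
    refine le_re_inv_of_norm_sub_le hx0 (sub_ne_zero.mpr (Ne.symm hz1)) ?_
    rw [ofReal_sub, ofReal_one, sub_sub_sub_cancel_left, ← norm_neg, neg_sub]
    exact hz.le.trans (min_le_right _ _)
  have hsplit : (z * (1 - z))⁻¹ = z⁻¹ + (1 - z)⁻¹ := by
    field_simp [sub_ne_zero.mpr (Ne.symm hz1)]
    ring
  have hre : (2 * min x (1 - x))⁻¹ ≤ ((z * (1 - z))⁻¹).re := by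
    rw [hsplit, add_re]
    rcases min_cases x (1 - x) with ⟨he, -⟩ | ⟨he, -⟩ <;> rw [he]
    · linarith [inv_pos.mpr (mul_pos two_pos hx0)]
    · linarith [inv_pos.mpr (mul_pos two_pos hx.1)]
  rw [wComplex, norm_mul, norm_exp, norm_inv, norm_real, Real.norm_of_nonneg wConst_pos.le,
    neg_re]
  gcongr
  exact inv_nonneg.mpr wConst_pos.le

lemma norm_iteratedDeriv_wComplex_le (m : ℕ) {x : ℝ} (hx : x ∈ Ioo (0:ℝ) 1) :
    ‖iteratedDeriv m wComplex x‖ ≤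
      m.factorial * (wConst⁻¹ * Real.exp (-(2 * min x (1 - x))⁻¹)) / (min x (1 - x) / 2) ^ m := by
  have ht := min_one_sub_pos hx
  refine norm_iteratedDeriv_le_of_forall_mem_sphere_norm_le m (half_pos ht)
    (differentiableOn_wComplex.diffContOnCl_ball
      (closedBall_subset_compl_zero_one (half_lt_self ht))) fun z hz => norm_wComplex_le hx ?_
  rw [mem_sphere_iff_norm.mp hz]
  exact half_lt_self ht

lemma factorial_mul_inv_div_half_pow_le {c t E : ℝ} (hc : 0 < c) (hc1 : c ≤ 1) (ht : 0 < t)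
    (hE : 0 ≤ E) {m : ℕ} (hm : 1 ≤ m) :
    m.factorial * (c⁻¹ * E) / (t / 2) ^ m ≤ m.factorial / (c / 2) ^ m * (t ^ (-(m : ℝ)) * E) := by
  have hcm : c ^ m ≤ c := pow_le_of_le_one hc.le hc1 (by omega)
  rw [Real.rpow_neg ht.le, Real.rpow_natCast, div_pow, div_pow]
  calc m.factorial * (c⁻¹ * E) / (t ^ m / 2 ^ m) = m.factorial * 2 ^ m * E / t ^ m * c⁻¹ := by
        field_simp
    _ ≤ m.factorial * 2 ^ m * E / t ^ m * (c ^ m)⁻¹ := by gcongr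
    _ = m.factorial / (c ^ m / 2 ^ m) * ((t ^ m)⁻¹ * E) := by field_simp

theorem stmt8 :
    ∃ lam1 : ℝ, lam1 ∈ Set.Ioo (0 : ℝ) 1 ∧
      ∀ m : ℕ, 1 ≤ m → ∀ x ∈ Set.Ioo (0 : ℝ) 1,
        |iteratedDeriv m w x| ≤ ((m.factorial : ℝ) / lam1 ^ m) *
          max (x ^ (-(m : ℝ)) * Real.exp (-(2 * x)⁻¹))
              ((1 - x) ^ (-(m : ℝ)) * Real.exp (-(2 * (1 - x))⁻¹)) := by
  refine ⟨wConst / 2, ⟨half_pos wConst_pos, by linarith [wConst_le_one]⟩, fun m hm x hx => ?_⟩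
  have hre := iteratedDeriv_eq_re_of_differentiableOn (toFinite _).isClosed.isOpen_compl
    isOpen_Ioo (fun y hy => closedBall_subset_compl_zero_one (min_one_sub_pos hy)
      (mem_closedBall_self le_rfl)) differentiableOn_wComplex (fun _ => w_eq_re_wComplex) m x hx
  calc |iteratedDeriv m w x| = |(iteratedDeriv m wComplex x).re| := by rw [hre]
    _ ≤ ‖iteratedDeriv m wComplex x‖ := abs_re_le_norm _
    _ ≤ _ := norm_iteratedDeriv_wComplex_le m hx
    _ ≤ m.factorial / (wConst / 2) ^ m *
          (min x (1 - x) ^ (-(m : ℝ)) * Real.exp (-(2 * min x (1 - x))⁻¹)) :=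
      factorial_mul_inv_div_half_pow_le wConst_pos wConst_le_one (min_one_sub_pos hx)
        (Real.exp_pos _).le hm
    _ ≤ _ := by
      refine mul_le_mul_of_nonneg_left ?_ (by have := wConst_pos; positivity)
      rcases min_cases x (1 - x) with ⟨he, -⟩ | ⟨he, -⟩ <;> rw [he]
      exacts [le_max_left _ _, le_max_right _ _]
end

section
/- For all A, B > 0 one has the Cauchy–Schlömilch identity ∫₀^{∞} exp(−(A s − B s⁻¹)²) ds = √π / (2A); consequently, for all σ > 0 and η > 0, ∫₀^{∞} exp(−σ s² − η s⁻²) ds = (√π / (2√σ)) · exp(−2√(ση)). -/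
/-!
The map `φ s = A s - B / s` is an increasing bijection of `(0, ∞)` onto `ℝ` with
`φ' s = A + B / s²`, so `∫ g = ∫₀^∞ (A + B / s²) g (φ s) ds` for integrable `g`. The inversion
`s ↦ B / (A s)` preserves `(0, ∞)` and turns `φ` into `-φ`; for even `g` it identifies
`∫₀^∞ (B / (A s²)) g (φ s) ds` with `∫₀^∞ g (φ s) ds`, whence `∫ g = 2 A ∫₀^∞ g (φ s) ds`.
With `g u = exp (-u²)` this is the first identity, and the second follows by completing the
square: `σ s² + η s⁻² = (√σ s - √η s⁻¹)² + 2 √(σ η)`.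
-/

open MeasureTheory Real Set

variable {E : Type*} [NormedAddCommGroup E] [NormedSpace ℝ E]

section Inversion

variable {c : ℝ}

lemma image_const_div_Ioi (hc : 0 < c) : (fun s : ℝ => c / s) '' Ioi 0 = Ioi 0 := by
  refine Subset.antisymm (image_subset_iff.2 fun s hs => div_pos hc hs) fun t ht => ?_
  exact ⟨c / t, div_pos hc ht, div_div_cancel₀ hc.ne'⟩

lemma injOn_const_div_Ioi (hc : 0 < c) : InjOn (fun s : ℝ => c / s) (Ioi 0) :=
  fun _ _ _ _ h => inv_injective (mul_left_cancel₀ hc.ne' h)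

lemma hasDerivAt_const_div {s : ℝ} (hs : s ≠ 0) :
    HasDerivAt (fun s : ℝ => c / s) (-(c / s ^ 2)) s := by
  simpa [div_eq_mul_inv] using (hasDerivAt_inv hs).const_mul c

lemma integrableOn_Ioi_comp_const_div_iff (hc : 0 < c) (f : ℝ → E) :
    IntegrableOn (fun s => (c / s ^ 2) • f (c / s)) (Ioi 0) ↔ IntegrableOn f (Ioi 0) := by
  conv_rhs => rw [← image_const_div_Ioi hc]
  rw [integrableOn_image_iff_integrableOn_abs_deriv_smul measurableSet_Ioi
    (fun s hs => (hasDerivAt_const_div (ne_of_gt hs)).hasDerivWithinAt) (injOn_const_div_Ioi hc)]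
  refine integrableOn_congr_fun (fun s (hs : 0 < s) => ?_) measurableSet_Ioi
  simp only [abs_neg, abs_of_pos (by positivity : 0 < c / s ^ 2)]

lemma integral_Ioi_comp_const_div [CompleteSpace E] (hc : 0 < c) (f : ℝ → E) :
    ∫ s in Ioi 0, (c / s ^ 2) • f (c / s) = ∫ s in Ioi 0, f s := by
  conv_rhs => rw [← image_const_div_Ioi hc]
  rw [integral_image_eq_integral_abs_deriv_smul measurableSet_Ioi
    (fun s hs => (hasDerivAt_const_div (ne_of_gt hs)).hasDerivWithinAt) (injOn_const_div_Ioi hc)]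
  refine setIntegral_congr_fun measurableSet_Ioi fun s (hs : 0 < s) => ?_
  simp only [abs_neg, abs_of_pos (by positivity : 0 < c / s ^ 2)]

end Inversion

section CauchySchlomilch

variable {A B : ℝ}

lemma strictMonoOn_mul_sub_mul_inv (hA : 0 < A) (hB : 0 ≤ B) :
    StrictMonoOn (fun s : ℝ => A * s - B * s⁻¹) (Ioi 0) := by
  intro a (ha : 0 < a) b (hb : 0 < b) hab
  have : b⁻¹ < a⁻¹ := (inv_lt_inv₀ hb ha).2 hab
  dsimp only
  nlinarith

lemma image_mul_sub_mul_inv_Ioi (hA : 0 < A) (hB : 0 < B) :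
    (fun s : ℝ => A * s - B * s⁻¹) '' Ioi 0 = univ := by
  refine eq_univ_of_forall fun y => ?_
  have hAB := mul_pos hA hB
  set D := √(y ^ 2 + 4 * A * B)
  have hD : D ^ 2 = y ^ 2 + 4 * A * B := sq_sqrt (by positivity)
  have hyD : 0 < y + D := by nlinarith [sqrt_nonneg (y ^ 2 + 4 * A * B)]
  -- the positive root of `A s² - y s - B = 0`
  refine ⟨(y + D) / (2 * A), div_pos hyD (by positivity), ?_⟩
  field_simp
  nlinarith

lemma hasDerivAt_mul_sub_mul_inv {s : ℝ} (hs : s ≠ 0) :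
    HasDerivAt (fun s : ℝ => A * s - B * s⁻¹) (A + B / s ^ 2) s := by
  simpa [div_eq_mul_inv] using
    ((hasDerivAt_id s).const_mul A).fun_sub ((hasDerivAt_inv hs).const_mul B)

lemma mul_sub_mul_inv_comp_div (hA : A ≠ 0) (hB : B ≠ 0) {s : ℝ} (hs : s ≠ 0) :
    A * (B / A / s) - B * (B / A / s)⁻¹ = -(A * s - B * s⁻¹) := by
  field_simp
  ring

lemma hasDerivWithinAt_mul_sub_mul_inv_Ioi {s : ℝ} (hs : s ∈ Ioi 0) :
    HasDerivWithinAt (fun s : ℝ => A * s - B * s⁻¹) (A + B / s ^ 2) (Ioi 0) s :=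
  (hasDerivAt_mul_sub_mul_inv (ne_of_gt hs)).hasDerivWithinAt

lemma integrableOn_Ioi_smul_comp_mul_sub_mul_inv {g : ℝ → E} (hg : Integrable g)
    (hA : 0 < A) (hB : 0 < B) :
    IntegrableOn (fun s => (A + B / s ^ 2) • g (A * s - B * s⁻¹)) (Ioi 0) := by
  have hg' : IntegrableOn g ((fun s : ℝ => A * s - B * s⁻¹) '' Ioi 0) := by
    rw [image_mul_sub_mul_inv_Ioi hA hB]
    exact hg.integrableOn
  refine ((integrableOn_image_iff_integrableOn_abs_deriv_smul measurableSet_Ioi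
    (fun s => hasDerivWithinAt_mul_sub_mul_inv_Ioi) (strictMonoOn_mul_sub_mul_inv hA hB.le).injOn
    g).1 hg').congr_fun (fun s (hs : 0 < s) => ?_) measurableSet_Ioi
  simp only [abs_of_pos (by positivity : 0 < A + B / s ^ 2)]

lemma integral_eq_integral_Ioi_smul_comp_mul_sub_mul_inv [CompleteSpace E] (g : ℝ → E)
    (hA : 0 < A) (hB : 0 < B) :
    ∫ u, g u = ∫ s in Ioi 0, (A + B / s ^ 2) • g (A * s - B * s⁻¹) := by
  rw [← setIntegral_univ, ← image_mul_sub_mul_inv_Ioi hA hB,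
    integral_image_eq_integral_abs_deriv_smul measurableSet_Ioi
      (fun s => hasDerivWithinAt_mul_sub_mul_inv_Ioi) (strictMonoOn_mul_sub_mul_inv hA hB.le).injOn]
  refine setIntegral_congr_fun measurableSet_Ioi fun s (hs : 0 < s) => ?_
  rw [abs_of_pos (by positivity)]

lemma integrableOn_Ioi_comp_mul_sub_mul_inv {g : ℝ → E} (hg : Integrable g)
    (hA : 0 < A) (hB : 0 < B) :
    IntegrableOn (fun s => g (A * s - B * s⁻¹)) (Ioi 0) := by
  have hbound : ∀ᵐ s ∂volume.restrict (Ioi 0), ‖(A + B / s ^ 2)⁻¹‖ ≤ A⁻¹ := by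
    refine ae_restrict_of_forall_mem measurableSet_Ioi fun s (hs : 0 < s) => ?_
    rw [norm_inv, norm_of_nonneg (by positivity)]
    exact inv_anti₀ hA (le_add_of_nonneg_right (by positivity))
  have hmeas : Measurable fun s : ℝ => (A + B / s ^ 2)⁻¹ := by fun_prop
  refine IntegrableOn.congr_fun ((integrableOn_Ioi_smul_comp_mul_sub_mul_inv hg hA hB).bdd_smul
    A⁻¹ hmeas.aestronglyMeasurable hbound) (fun s (hs : 0 < s) => ?_) measurableSet_Ioi
  simp only [Pi.smul_apply', smul_smul]
  rw [inv_mul_cancel₀ (by positivity), one_smul]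

theorem integral_Ioi_comp_mul_sub_mul_inv_of_even [CompleteSpace E] {g : ℝ → E}
    (hg : Integrable g) (hg_even : ∀ u, g (-u) = g u) (hA : 0 < A) (hB : 0 < B) :
    ∫ s in Ioi 0, g (A * s - B * s⁻¹) = (2 * A)⁻¹ • ∫ u, g u := by
  set f : ℝ → E := fun s => g (A * s - B * s⁻¹)
  have hf := integrableOn_Ioi_comp_mul_sub_mul_inv hg hA hB
  have hf_symm : EqOn (fun s => (B / A / s ^ 2) • f (B / A / s))
      (fun s => (B / A / s ^ 2) • f s) (Ioi 0) := fun s (hs : 0 < s) => by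
    simp only [f, mul_sub_mul_inv_comp_div hA.ne' hB.ne' hs.ne', hg_even]
  have hf_dual : IntegrableOn (fun s => (B / A / s ^ 2) • f s) (Ioi 0) :=
    ((integrableOn_Ioi_comp_const_div_iff (div_pos hB hA) f).2 hf).congr_fun hf_symm
      measurableSet_Ioi
  have hdual : ∫ s in Ioi 0, (B / A / s ^ 2) • f s = ∫ s in Ioi 0, f s := by
    rw [← integral_Ioi_comp_const_div (div_pos hB hA) f,
      setIntegral_congr_fun measurableSet_Ioi hf_symm]
  have hweight : ∀ s ∈ Ioi (0 : ℝ),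
      (A + B / s ^ 2) • f s = A • (f s + (B / A / s ^ 2) • f s) := by
    intro s _
    rw [smul_add, smul_smul, ← add_smul]
    field_simp
  have : ∫ u, g u = (2 * A) • ∫ s in Ioi 0, f s := by
    calc ∫ u, g u = ∫ s in Ioi 0, (A + B / s ^ 2) • f s :=
          integral_eq_integral_Ioi_smul_comp_mul_sub_mul_inv g hA hB
      _ = A • ((∫ s in Ioi 0, f s) + ∫ s in Ioi 0, (B / A / s ^ 2) • f s) := by
          rw [setIntegral_congr_fun measurableSet_Ioi hweight, integral_smul,
            integral_add hf hf_dual]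
      _ = (2 * A) • ∫ s in Ioi 0, f s := by rw [hdual, ← two_smul ℝ, smul_smul, mul_comm]
  rw [this, smul_smul, inv_mul_cancel₀ (by positivity), one_smul]

end CauchySchlomilch

theorem integral_Ioi_exp_neg_sq_mul_sub_mul_inv {A B : ℝ} (hA : 0 < A) (hB : 0 < B) :
    ∫ s in Ioi 0, exp (-(A * s - B * s⁻¹) ^ 2) = √π / (2 * A) := by
  have hgauss : ∫ u : ℝ, exp (-u ^ 2) = √π := by simpa using integral_gaussian 1
  rw [integral_Ioi_comp_mul_sub_mul_inv_of_even (g := fun u => exp (-u ^ 2))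
    (by simpa using integrable_exp_neg_mul_sq one_pos) (fun u => by simp) hA hB, hgauss,
    smul_eq_mul, inv_mul_eq_div]

lemma exp_neg_mul_sq_sub_mul_inv_sq {σ η s : ℝ} (hσ : 0 ≤ σ) (hη : 0 ≤ η) (hs : s ≠ 0) :
    exp (-σ * s ^ 2 - η * s⁻¹ ^ 2) = exp (-2 * √(σ * η)) * exp (-(√σ * s - √η * s⁻¹) ^ 2) := by
  rw [← exp_add, sqrt_mul hσ]
  congr 1
  linear_combination s ^ 2 * sq_sqrt hσ + s⁻¹ ^ 2 * sq_sqrt hη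
    - 2 * √σ * √η * mul_inv_cancel₀ hs

theorem stmt10 :
    (∀ A B : ℝ, 0 < A → 0 < B →
      (∫ s in Set.Ioi (0:ℝ), Real.exp (-(A * s - B * s⁻¹) ^ 2))
        = Real.sqrt Real.pi / (2 * A)) ∧
    (∀ σ η : ℝ, 0 < σ → 0 < η →
      (∫ s in Set.Ioi (0:ℝ), Real.exp (-σ * s ^ 2 - η * s⁻¹ ^ 2))
        = Real.sqrt Real.pi / (2 * Real.sqrt σ) * Real.exp (-2 * Real.sqrt (σ * η))) := by
  refine ⟨fun _ _ => integral_Ioi_exp_neg_sq_mul_sub_mul_inv, fun σ η hσ hη => ?_⟩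
  rw [setIntegral_congr_fun measurableSet_Ioi fun s (hs : 0 < s) =>
      exp_neg_mul_sq_sub_mul_inv_sq hσ.le hη.le hs.ne', integral_const_mul,
    integral_Ioi_exp_neg_sq_mul_sub_mul_inv (sqrt_pos.2 hσ) (sqrt_pos.2 hη), mul_comm]
end

section
/- For all p, q > 0 there exists a constant λ̃ = λ̃(p,q) > 1 such that for every m ∈ ℕ⁺, ∫₀¹ |w_{p,q}^{(m)}(x)| dx ≤ λ̃^m · m^{(1 + 1/min{p,q})·m}. -/
/-! On `(0, 1)` the `m`-th derivative of `exp (-x^(-p) (1 - x)^(-q))` is that exponential times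
a sum of `4 ^ m` monomials `c x^(-(p k + u)) (1 - x)^(-(q k + v))` with `k, u, v ≤ m` and
`|c| ≤ (p + q + 1) ^ m m ^ (m - k)`. For `x ≤ 1/2` the exponential is at most `exp (-t)` with
`t = x^(-p)`, and `t ^ a exp (-t) ≤ a ^ a` for `a = k + u / p ≤ k + m / min p q` bounds such a
monomial by `C ^ m m ^ (k + m / min p q)`; for `x ≥ 1/2` the same holds by the symmetry
`x ↦ 1 - x`. Multiplying by `|c|` and by the number of monomials gives the pointwise bound
`λ ^ m m ^ ((1 + 1 / min p q) m)`, and the interval has length one. -/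

open Finset

/-- The generalized exponential weighting function with regularity parameters `p, q`. -/
noncomputable def wpq (p q : ℝ) (x : ℝ) : ℝ :=
  if 0 < x ∧ x < 1 then
    (∫ s in (0:ℝ)..1, Real.exp (-(s ^ (-p) * (1 - s) ^ (-q))))⁻¹ *
      Real.exp (-(x ^ (-p) * (1 - x) ^ (-q)))
  else 0

namespace Wpq

noncomputable def normConst (p q : ℝ) : ℝ :=
  (∫ s in (0:ℝ)..1, Real.exp (-(s ^ (-p) * (1 - s) ^ (-q))))⁻¹

noncomputable def expArg (p q x : ℝ) : ℝ := x ^ (-p) * (1 - x) ^ (-q)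

lemma wpq_eq_of_mem_Ioo {p q x : ℝ} (hx : x ∈ Set.Ioo 0 1) :
    wpq p q x = normConst p q * Real.exp (-expArg p q x) := by
  rw [wpq, if_pos ⟨hx.1, hx.2⟩]
  rfl

lemma hasDerivAt_expArg (p q : ℝ) {x : ℝ} (hx : x ∈ Set.Ioo 0 1) :
    HasDerivAt (expArg p q)
      (-p * x ^ (-p - 1) * (1 - x) ^ (-q) + q * x ^ (-p) * (1 - x) ^ (-q - 1)) x := by
  refine (((hasDerivAt_id' x).rpow_const (p := -p) (Or.inl hx.1.ne')).fun_mul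
    (((hasDerivAt_id' x).const_sub 1).rpow_const (p := -q) (Or.inl ?_))).congr_deriv (by ring)
  linarith [hx.2]

structure Monomial where
  coeff : ℝ
  k : ℕ
  u : ℕ
  v : ℕ

namespace Monomial

noncomputable def eval (p q : ℝ) (t : Monomial) (x : ℝ) : ℝ :=
  t.coeff * x ^ (-(p * t.k + t.u)) * (1 - x) ^ (-(q * t.k + t.v))

/-- Product rule: the first two terms differentiate the powers of `x` and `1 - x`, the last two
the factor `exp (-expArg p q)`. -/
def derivTerms (p q : ℝ) (t : Monomial) : Multiset Monomial :=
  {⟨-(t.coeff * (p * t.k + t.u)), t.k, t.u + 1, t.v⟩,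
   ⟨t.coeff * (q * t.k + t.v), t.k, t.u, t.v + 1⟩,
   ⟨t.coeff * p, t.k + 1, t.u + 1, t.v⟩,
   ⟨-(t.coeff * q), t.k + 1, t.u, t.v + 1⟩}

lemma hasDerivAt_eval_mul_exp (p q : ℝ) (t : Monomial) {x : ℝ} (hx : x ∈ Set.Ioo 0 1) :
    HasDerivAt (fun y => t.eval p q y * Real.exp (-expArg p q y))
      (((t.derivTerms p q).map (eval p q · x)).sum * Real.exp (-expArg p q x)) x := by
  obtain ⟨c, k, u, v⟩ := t
  have hx0 := hx.1
  have hx1 : 0 < 1 - x := by linarith [hx.2]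
  set A : ℝ := -(p * k + u)
  set B : ℝ := -(q * k + v)
  have h := (((hasDerivAt_id' x).rpow_const (p := A) (Or.inl hx0.ne')).const_mul c).fun_mul
    (((hasDerivAt_id' x).const_sub 1).rpow_const (p := B) (Or.inl hx1.ne')) |>.fun_mul
    (hasDerivAt_expArg p q hx).fun_neg.exp
  refine h.congr_deriv ?_
  simp only [derivTerms, eval, Multiset.insert_eq_cons, Multiset.map_cons, Multiset.sum_cons,
    Multiset.map_singleton, Multiset.sum_singleton]
  push_cast
  rw [show -(p * k + (u + 1)) = A + -1 by ring, show -(q * k + (v + 1)) = B + -1 by ring,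
    show -(p * (k + 1) + (u + 1)) = A + (-p - 1) by ring, show -(q * (k + 1) + v) = B + -q by ring,
    show -(p * (k + 1) + u) = A + -p by ring, show -(q * (k + 1) + (v + 1)) = B + (-q - 1) by ring]
  simp only [Real.rpow_add hx0, Real.rpow_add hx1, Real.rpow_sub_one hx0.ne',
    Real.rpow_sub_one hx1.ne', Real.rpow_neg_one]
  field_simp
  ring

end Monomial

open Monomial

noncomputable def evalSum (p q : ℝ) (s : Multiset Monomial) (x : ℝ) : ℝ :=
  (s.map (eval p q · x)).sum

lemma hasDerivAt_evalSum_mul_exp (p q : ℝ) (s : Multiset Monomial) {x : ℝ}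
    (hx : x ∈ Set.Ioo 0 1) :
    HasDerivAt (fun y => evalSum p q s y * Real.exp (-expArg p q y))
      (evalSum p q (s.bind (derivTerms p q)) x * Real.exp (-expArg p q x)) x := by
  induction s using Multiset.induction_on with
  | empty => simpa [evalSum] using hasDerivAt_const x (0 : ℝ)
  | cons t s ih =>
    simp only [evalSum, Multiset.cons_bind, Multiset.map_cons, Multiset.map_add, Multiset.sum_cons,
      Multiset.sum_add, add_mul] at ih ⊢
    exact (t.hasDerivAt_eval_mul_exp p q hx).add ih

def expansion (p q : ℝ) : ℕ → Multiset Monomial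
  | 0 => {⟨1, 0, 0, 0⟩}
  | m + 1 => (expansion p q m).bind (derivTerms p q)

lemma card_expansion (p q : ℝ) (m : ℕ) : (expansion p q m).card = 4 ^ m := by
  induction m with
  | zero => rfl
  | succ m ih =>
    have h4 (t : Monomial) : (derivTerms p q t).card = 4 := by simp [derivTerms]
    simp [expansion, Multiset.card_bind, h4, ih, pow_succ]

lemma iteratedDeriv_wpq_eq (p q : ℝ) (m : ℕ) {x : ℝ} (hx : x ∈ Set.Ioo 0 1) :
    iteratedDeriv m (wpq p q) x =
      normConst p q * (evalSum p q (expansion p q m) x * Real.exp (-expArg p q x)) := by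
  induction m generalizing x with
  | zero => simp [wpq_eq_of_mem_Ioo hx, evalSum, expansion, eval, expArg]
  | succ m ih =>
    have hloc : iteratedDeriv m (wpq p q) =ᶠ[nhds x] fun y =>
        normConst p q * (evalSum p q (expansion p q m) y * Real.exp (-expArg p q y)) :=
      Filter.eventuallyEq_of_mem (Ioo_mem_nhds hx.1 hx.2) fun y hy => ih hy
    rw [iteratedDeriv_succ, hloc.deriv_eq]
    exact ((hasDerivAt_evalSum_mul_exp p q _ hx).const_mul _).deriv

lemma abs_mul_le_pow_succ {C c e : ℝ} {m n j n' : ℕ} (hC : 0 ≤ C) (hc : |c| ≤ C ^ m * m ^ n)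
    (he : |e| ≤ C * (m + 1) ^ j) (hn' : n' = n + j) :
    |c * e| ≤ C ^ (m + 1) * ((m + 1 : ℕ) : ℝ) ^ n' := by
  have hmono : (m : ℝ) ^ n ≤ (m + 1) ^ n := pow_le_pow_left₀ (by positivity) (by linarith) n
  calc |c * e| = |c| * |e| := abs_mul c e
    _ ≤ (C ^ m * (m + 1) ^ n) * (C * (m + 1) ^ j) := by gcongr; exact hc.trans (by gcongr)
    _ = C ^ (m + 1) * ((m + 1 : ℕ) : ℝ) ^ n' := by push_cast; rw [hn']; ring

lemma bounds_of_mem_expansion {p q : ℝ} (hp : 0 ≤ p) (hq : 0 ≤ q) {m : ℕ} {t : Monomial}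
    (ht : t ∈ expansion p q m) :
    t.k ≤ m ∧ t.u ≤ m ∧ t.v ≤ m ∧ |t.coeff| ≤ (p + q + 1) ^ m * (m : ℝ) ^ (m - t.k) := by
  induction m generalizing t with
  | zero => simp_all [expansion]
  | succ m ih =>
    obtain ⟨⟨c, k, u, v⟩, hs, ht⟩ := Multiset.mem_bind.mp ht
    obtain ⟨hk, hu, hv, hc⟩ := ih hs
    dsimp only at hk hu hv hc
    have hkm : (k : ℝ) ≤ m := by exact_mod_cast hk
    have hum : (u : ℝ) ≤ m := by exact_mod_cast hu
    have hvm : (v : ℝ) ≤ m := by exact_mod_cast hv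
    have hC : 0 ≤ p + q + 1 := by positivity
    simp only [derivTerms, Multiset.insert_eq_cons, Multiset.mem_cons,
      Multiset.mem_singleton] at ht
    rcases ht with rfl | rfl | rfl | rfl <;> dsimp only <;>
      refine ⟨by omega, by omega, by omega, ?_⟩
    · rw [abs_neg]
      refine abs_mul_le_pow_succ (n := m - k) (j := 1) hC hc ?_ (by omega)
      rw [abs_of_nonneg (by positivity)]
      nlinarith
    · refine abs_mul_le_pow_succ (n := m - k) (j := 1) hC hc ?_ (by omega)
      rw [abs_of_nonneg (by positivity)]
      nlinarith
    · exact abs_mul_le_pow_succ (n := m - k) (j := 0) hC hc (by rw [abs_of_nonneg hp]; linarith)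
        (by omega)
    · rw [abs_neg]
      exact abs_mul_le_pow_succ (n := m - k) (j := 0) hC hc (by rw [abs_of_nonneg hq]; linarith)
        (by omega)

lemma rpow_mul_exp_neg_le_rpow_self {t a : ℝ} (ht : 0 < t) (ha : 0 ≤ a) :
    t ^ a * Real.exp (-t) ≤ a ^ a := by
  rcases ha.eq_or_lt with rfl | ha
  · simpa using ht.le
  calc t ^ a * Real.exp (-t) = a ^ a * (t / a) ^ a * Real.exp (-t) := by
        rw [Real.div_rpow ht.le ha.le]; field_simp
    _ ≤ a ^ a * Real.exp (t / a - 1) ^ a * Real.exp (-t) := by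
        gcongr; linarith [Real.add_one_le_exp (t / a - 1)]
    _ = a ^ a * Real.exp (-a) := by
        rw [← Real.exp_mul, mul_assoc, ← Real.exp_add]; field_simp; ring_nf
    _ ≤ a ^ a := mul_le_of_le_one_right (by positivity) (Real.exp_le_one_iff.mpr (by linarith))

lemma rpow_neg_mul_exp_neg_rpow_le {r s y : ℝ} (hr : 0 < r) (hrs : r ≤ s) (hy : 0 < y)
    {m k u : ℕ} (hm : 1 ≤ m) (hk : k ≤ m) (hu : u ≤ m) :
    y ^ (-(s * k + u)) * Real.exp (-y ^ (-s)) ≤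
      ((1 + 1 / r) ^ (1 + 1 / r)) ^ m * (m : ℝ) ^ (k + m / r) := by
  have hs : 0 < s := hr.trans_le hrs
  have hm1 : (1 : ℝ) ≤ m := by exact_mod_cast hm
  have hB : (1 : ℝ) ≤ 1 + 1 / r := by simp [hr.le]
  set a : ℝ := k + u / s
  have ha : 0 ≤ a := by positivity
  have hab : a ≤ k + m / r := by
    gcongr k + ?_
    exact div_le_div₀ (by positivity) (by exact_mod_cast hu) hr hrs
  have hbm : (k : ℝ) + m / r ≤ (1 + 1 / r) * m := by
    have : (k : ℝ) ≤ m := by exact_mod_cast hk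
    linarith [show (m : ℝ) / r = 1 / r * m by ring]
  calc y ^ (-(s * k + u)) * Real.exp (-y ^ (-s)) = (y ^ (-s)) ^ a * Real.exp (-y ^ (-s)) := by
        rw [← Real.rpow_mul hy.le]; congr 2; simp only [a]; field_simp
    _ ≤ a ^ a := rpow_mul_exp_neg_le_rpow_self (by positivity) ha
    _ ≤ ((1 + 1 / r) * m) ^ a := by gcongr; linarith
    _ = (1 + 1 / r) ^ a * (m : ℝ) ^ a := Real.mul_rpow (by linarith) (by linarith)
    _ ≤ (1 + 1 / r) ^ ((1 + 1 / r) * m) * (m : ℝ) ^ (k + m / r) := by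
        gcongr; linarith
    _ = ((1 + 1 / r) ^ (1 + 1 / r)) ^ m * (m : ℝ) ^ (k + m / r) := by
        rw [Real.rpow_mul_natCast (by linarith)]

lemma rpow_neg_le_two_rpow {z e : ℝ} (hz : 1 / 2 ≤ z) (he : 0 ≤ e) : z ^ (-e) ≤ 2 ^ e := by
  calc z ^ (-e) ≤ (1 / 2) ^ (-e) := Real.rpow_le_rpow_of_nonpos (by norm_num) hz (by linarith)
    _ = 2 ^ e := by rw [one_div, Real.inv_rpow zero_le_two, ← Real.rpow_neg zero_le_two, neg_neg]

lemma expArg_one_sub (p q x : ℝ) : expArg p q (1 - x) = expArg q p x := by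
  simp [expArg, mul_comm]

variable {p q r : ℝ} {m k u v : ℕ}

lemma monomial_mul_exp_le_of_le_half (hr : 0 < r) (hrp : r ≤ p) (hq : 0 ≤ q) {x : ℝ}
    (hx0 : 0 < x) (hx : x ≤ 1 / 2) (hm : 1 ≤ m) (hk : k ≤ m) (hu : u ≤ m) (hv : v ≤ m) :
    x ^ (-(p * k + u)) * (1 - x) ^ (-(q * k + v)) * Real.exp (-expArg p q x) ≤
      (2 ^ (p + q + 1) * (1 + 1 / r) ^ (1 + 1 / r)) ^ m * (m : ℝ) ^ (k + m / r) := by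
  have hx1 : 0 < 1 - x := by linarith
  have hkm : (k : ℝ) ≤ m := by exact_mod_cast hk
  have hvm : (v : ℝ) ≤ m := by exact_mod_cast hv
  have hfar : (1 - x) ^ (-(q * k + v)) ≤ (2 ^ (p + q + 1)) ^ m := by
    rw [← Real.rpow_mul_natCast zero_le_two]
    refine (rpow_neg_le_two_rpow (by linarith) (by positivity)).trans ?_
    gcongr
    · norm_num
    · nlinarith
  have hexp : Real.exp (-expArg p q x) ≤ Real.exp (-x ^ (-p)) := by
    gcongr
    refine le_mul_of_one_le_right (by positivity) ?_
    exact Real.one_le_rpow_of_pos_of_le_one_of_nonpos hx1 (by linarith) (by linarith)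
  calc x ^ (-(p * k + u)) * (1 - x) ^ (-(q * k + v)) * Real.exp (-expArg p q x)
      ≤ (1 - x) ^ (-(q * k + v)) * (x ^ (-(p * k + u)) * Real.exp (-x ^ (-p))) := by
        rw [mul_comm (x ^ _), mul_assoc]; gcongr
    _ ≤ (2 ^ (p + q + 1)) ^ m * (((1 + 1 / r) ^ (1 + 1 / r)) ^ m * (m : ℝ) ^ (k + m / r)) := by
        exact mul_le_mul hfar (rpow_neg_mul_exp_neg_rpow_le hr hrp hx0 hm hk hu) (by positivity)
          (by positivity)
    _ = _ := by ring

lemma monomial_mul_exp_le (hp : 0 < p) (hq : 0 < q) {x : ℝ} (hx : x ∈ Set.Ioo 0 1)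
    (hm : 1 ≤ m) (hk : k ≤ m) (hu : u ≤ m) (hv : v ≤ m) :
    x ^ (-(p * k + u)) * (1 - x) ^ (-(q * k + v)) * Real.exp (-expArg p q x) ≤
      (2 ^ (p + q + 1) * (1 + 1 / min p q) ^ (1 + 1 / min p q)) ^ m *
        (m : ℝ) ^ (k + m / min p q) := by
  rcases le_or_gt x (1 / 2) with hx2 | hx2
  · exact monomial_mul_exp_le_of_le_half (lt_min hp hq) (min_le_left p q) hq.le hx.1 hx2
      hm hk hu hv
  · -- reflect `x ↦ 1 - x`, which swaps the roles of `(p, u)` and `(q, v)`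
    have h := monomial_mul_exp_le_of_le_half (lt_min hq hp) (min_le_left q p) hp.le
      (x := 1 - x) (by linarith [hx.2]) (by linarith) hm hk hv hu
    rwa [sub_sub_cancel, expArg_one_sub, min_comm, add_comm q p, mul_comm (_ ^ _)] at h

lemma natCast_pow_sub_mul_rpow_add (hr : 0 < r) (hm : 1 ≤ m) (hk : k ≤ m) :
    (m : ℝ) ^ (m - k) * (m : ℝ) ^ (k + m / r) = (m : ℝ) ^ ((1 + 1 / r) * m) := by
  rw [← Real.rpow_natCast, ← Real.rpow_add (by positivity), Nat.cast_sub hk]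
  congr 1
  field_simp
  ring

noncomputable def monomialConst (p q : ℝ) : ℝ :=
  (p + q + 1) * (2 ^ (p + q + 1) * (1 + 1 / min p q) ^ (1 + 1 / min p q))

lemma abs_eval_mul_exp_le (hp : 0 < p) (hq : 0 < q) {x : ℝ} (hx : x ∈ Set.Ioo 0 1)
    (hm : 1 ≤ m) {t : Monomial} (ht : t ∈ expansion p q m) :
    |t.eval p q x| * Real.exp (-expArg p q x) ≤
      monomialConst p q ^ m * (m : ℝ) ^ ((1 + 1 / min p q) * m) := by
  obtain ⟨hk, hu, hv, hc⟩ := bounds_of_mem_expansion hp.le hq.le ht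
  have hx1 : 0 < 1 - x := by linarith [hx.2]
  rw [monomialConst, eval, abs_mul, abs_mul, abs_of_pos (Real.rpow_pos_of_pos hx.1 _),
    abs_of_pos (Real.rpow_pos_of_pos hx1 _), mul_assoc, mul_assoc, ← mul_assoc (x ^ _),
    mul_pow, ← natCast_pow_sub_mul_rpow_add (lt_min hp hq) hm hk]
  calc _ ≤ ((p + q + 1) ^ m * (m : ℝ) ^ (m - t.k)) *
        ((2 ^ (p + q + 1) * (1 + 1 / min p q) ^ (1 + 1 / min p q)) ^ m *
          (m : ℝ) ^ (t.k + m / min p q)) :=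
        mul_le_mul hc (monomial_mul_exp_le hp hq hx hm hk hu hv)
          (mul_nonneg (mul_nonneg (Real.rpow_nonneg hx.1.le _) (Real.rpow_nonneg hx1.le _))
            (Real.exp_pos _).le)
          ((abs_nonneg _).trans hc)
    _ = _ := by ring

lemma one_le_monomialConst (hp : 0 < p) (hq : 0 < q) : 1 ≤ monomialConst p q := by
  have h2 : 1 ≤ (2 : ℝ) ^ (p + q + 1) := Real.one_le_rpow (by norm_num) (by positivity)
  have hr : 1 ≤ (1 + 1 / min p q) ^ (1 + 1 / min p q) :=
    Real.one_le_rpow (by simp [(lt_min hp hq).le]) (by positivity)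
  exact one_le_mul_of_one_le_of_one_le (by linarith) (one_le_mul_of_one_le_of_one_le h2 hr)

lemma abs_iteratedDeriv_wpq_le (hp : 0 < p) (hq : 0 < q) (hm : 1 ≤ m) {x : ℝ}
    (hx : x ∈ Set.Ioo 0 1) :
    |iteratedDeriv m (wpq p q) x| ≤
      |normConst p q| * ((4 * monomialConst p q) ^ m * (m : ℝ) ^ ((1 + 1 / min p q) * m)) := by
  rw [iteratedDeriv_wpq_eq p q m hx, abs_mul, abs_mul, abs_of_pos (Real.exp_pos _)]
  refine mul_le_mul_of_nonneg_left ?_ (abs_nonneg _)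
  calc |evalSum p q (expansion p q m) x| * Real.exp (-expArg p q x)
      ≤ ((expansion p q m).map (fun t => |t.eval p q x| * Real.exp (-expArg p q x))).sum := by
        rw [Multiset.sum_map_mul_right]
        gcongr
        exact Multiset.abs_sum_le_sum_abs.trans_eq (congrArg _ (Multiset.map_map _ _ _))
    _ ≤ 4 ^ m * (monomialConst p q ^ m * (m : ℝ) ^ ((1 + 1 / min p q) * m)) := by
        refine (Multiset.sum_le_card_nsmul _
          (monomialConst p q ^ m * (m : ℝ) ^ ((1 + 1 / min p q) * m)) ?_).trans_eq
          (by simp [card_expansion])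
        simp only [Multiset.mem_map]
        rintro _ ⟨t, ht, rfl⟩
        exact abs_eval_mul_exp_le hp hq hx hm ht
    _ = (4 * monomialConst p q) ^ m * (m : ℝ) ^ ((1 + 1 / min p q) * m) := by
        rw [mul_pow, mul_assoc]

lemma integral_abs_iteratedDeriv_wpq_le (hp : 0 < p) (hq : 0 < q) (hm : 1 ≤ m) :
    ∫ x in (0:ℝ)..1, |iteratedDeriv m (wpq p q) x| ≤
      |normConst p q| * ((4 * monomialConst p q) ^ m * (m : ℝ) ^ ((1 + 1 / min p q) * m)) := by
  have hpoint : ∀ᵐ x, x ∈ Set.uIoc 0 1 → ‖|iteratedDeriv m (wpq p q) x|‖ ≤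
      |normConst p q| * ((4 * monomialConst p q) ^ m * (m : ℝ) ^ ((1 + 1 / min p q) * m)) := by
    filter_upwards [MeasureTheory.Measure.ae_ne MeasureTheory.volume (1 : ℝ)] with x hx1 hx
    rw [Set.uIoc_of_le zero_le_one] at hx
    simpa using abs_iteratedDeriv_wpq_le hp hq hm ⟨hx.1, hx.2.lt_of_ne hx1⟩
  simpa using (Real.le_norm_self _).trans
    (intervalIntegral.norm_integral_le_of_norm_le_const_ae hpoint)

end Wpq

open Wpq in
theorem stmt12 (p q : ℝ) (hp : 0 < p) (hq : 0 < q) :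
    ∃ lamt > 1, ∀ m : ℕ, 1 ≤ m →
      (∫ x in (0:ℝ)..1, |iteratedDeriv m (wpq p q) x|)
        ≤ lamt ^ m * (m : ℝ) ^ ((1 + 1 / min p q) * m) := by
  have hc := abs_nonneg (normConst p q)
  have hK : 1 ≤ 4 * monomialConst p q := by linarith [one_le_monomialConst hp hq]
  refine ⟨(|normConst p q| + 2) * (4 * monomialConst p q), by nlinarith,
    fun m hm => (integral_abs_iteratedDeriv_wpq_le hp hq hm).trans ?_⟩
  rw [mul_pow (|normConst p q| + 2), ← mul_assoc]
  gcongr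
  calc |normConst p q| ≤ |normConst p q| + 2 := by linarith
    _ ≤ (|normConst p q| + 2) ^ m := le_self_pow₀ (by linarith) (by omega)
end
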